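/- Let E ⊂ ℝ^n be nonempty compact with diameter M, let s > n and r > 0. If a Borel probability measure μ on E satisfies ∫ φ_r^s(x−y) dμ(y) ≥ γ for every x ∈ E, then N_r(E) ≤ c_{n,s}/γ where c_{n,s} depends only on n and s. -/

import Mathlib

open MeasureTheory Metric Classical

/-- The kernel φ_r^s(x) = min{1, (r/|x|)^s}, with value 1 at x = 0. -/
noncomputable def phiKer (n : ℕ) (s r : ℝ) (x : EuclideanSpace ℝ (Fin n)) : ℝ :=
  if x = 0 then 1 else min 1 ((r / ‖x‖) ^ s)

/-- N_r(E): the minimal number of sets of diameter at most r needed to cover E. -/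
noncomputable def coverNum {X : Type*} [PseudoMetricSpace X] (E : Set X) (r : ℝ) : ℕ :=
  sInf {k | ∃ S : Finset (Set X), S.card = k ∧ (∀ A ∈ S, Metric.diam A ≤ r) ∧ E ⊆ ⋃₀ ↑S}

/-!
Let `S ⊆ E` be a maximal `r/2`-separated set. The closed `r/2`-balls around its points cover
`E`, so `N_r(E) ≤ #S`, and summing the hypothesis over `S` gives
`#S γ ≤ ∫ Σ_{x ∈ S} φ(x - y) dμ(y)`. The sum is bounded uniformly in `y`: the balls
`B(x, r/4)`, `x ∈ S`, are disjoint, and `φ(x - y) ≤ 3^s ⟨(z - y)/r⟩^{-s}` for every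
`z ∈ B(x, r/4)`, so averaging over these balls bounds the sum by
`4^n 3^s ∫ ⟨w⟩^{-s} dw / |B(0, 1)|`, which is finite because `s > n`.
-/

open scoped ENNReal NNReal

section Covering

variable {X : Type*} [PseudoMetricSpace X] {A : Set X} {ε : ℝ≥0}

lemma Metric.IsCover.coverNum_two_mul_le_encard {C : Set X} (hC : IsCover ε A C) :
    (coverNum A (2 * ε) : ℕ∞) ≤ C.encard := by
  rcases C.finite_or_infinite with hfin | hinf
  · rw [hfin.encard_eq_coe_toFinset_card, Nat.cast_le]
    refine (Nat.sInf_le ?_).trans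
      (Finset.card_image_le (s := hfin.toFinset) (f := (closedBall · ε)))
    refine ⟨_, Eq.refl _, ?_, ?_⟩
    · simp only [Finset.mem_image, forall_exists_index, and_imp]
      rintro _ x _ rfl
      exact (diam_closedBall ε.coe_nonneg).trans_eq (by ring)
    · simpa [isCover_iff_subset_iUnion_closedBall, Set.sUnion_image] using hC
  · simp [hinf.encard_eq]

lemma coverNum_two_mul_le_externalCoveringNumber (ε : ℝ≥0) (A : Set X) :
    (coverNum A (2 * ε) : ℕ∞) ≤ externalCoveringNumber ε A :=
  le_iInf₂ fun _ hC => hC.coverNum_two_mul_le_encard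

lemma packingNumber_le_of_forall_finset_card_le {N : ℕ}
    (h : ∀ C : Finset X, ↑C ⊆ A → IsSeparated ε (C : Set X) → C.card ≤ N) :
    packingNumber ε A ≤ N := by
  refine iSup₂_le fun C hCA => iSup_le fun hC => ?_
  rcases C.finite_or_infinite with hfin | hinf
  · rw [hfin.encard_eq_coe_toFinset_card, Nat.cast_le]
    exact h _ (by simpa using hCA) (by simpa using hC)
  · obtain ⟨D, hDC, hD⟩ := hinf.exists_subset_card_eq (N + 1)
    have := h D (hDC.trans hCA) (hC.subset hDC)
    omega

end Covering

lemma sum_mul_measureReal_ball_le_integral {X : Type*} [PseudoMetricSpace X] [ProperSpace X]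
    [MeasurableSpace X] [OpensMeasurableSpace X] {μ : Measure X} [IsFiniteMeasureOnCompacts μ]
    {S : Finset X} {ρ : ℝ} (hS : (S : Set X).PairwiseDisjoint (ball · ρ)) {f g : X → ℝ}
    (hg : Integrable g μ) (hg_nonneg : 0 ≤ g)
    (hfg : ∀ x ∈ S, ∀ z ∈ ball x ρ, f x ≤ g z) :
    ∑ x ∈ S, μ.real (ball x ρ) * f x ≤ ∫ z, g z ∂μ :=
  calc ∑ x ∈ S, μ.real (ball x ρ) * f x = ∑ x ∈ S, ∫ _ in ball x ρ, f x ∂μ := by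
        simp only [setIntegral_const, smul_eq_mul]
    _ ≤ ∑ x ∈ S, ∫ z in ball x ρ, g z ∂μ := Finset.sum_le_sum fun x hx =>
        setIntegral_mono_on (integrableOn_const measure_ball_lt_top.ne) hg.integrableOn
          measurableSet_ball (hfg x hx)
    _ = ∫ z in ⋃ x ∈ S, ball x ρ, g z ∂μ :=
        (integral_biUnion_finset S (fun _ _ => measurableSet_ball) hS
          fun _ _ => hg.integrableOn).symm
    _ ≤ ∫ z, g z ∂μ := setIntegral_le_integral hg (.of_forall hg_nonneg)

section Kernel

variable {n : ℕ} {s r : ℝ}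

lemma phiKer_nonneg (hr : 0 ≤ r) (x : EuclideanSpace ℝ (Fin n)) : 0 ≤ phiKer n s r x := by
  unfold phiKer
  split_ifs
  exacts [zero_le_one, le_min zero_le_one (by positivity)]

lemma phiKer_le_one (x : EuclideanSpace ℝ (Fin n)) : phiKer n s r x ≤ 1 := by
  unfold phiKer
  split_ifs
  exacts [le_rfl, min_le_left _ _]

lemma measurable_phiKer : Measurable (phiKer n s r) :=
  Measurable.ite (measurableSet_singleton 0) measurable_const (by fun_prop)

lemma integrable_phiKer_sub (hr : 0 ≤ r) (μ : Measure (EuclideanSpace ℝ (Fin n)))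
    [IsFiniteMeasure μ] (x : EuclideanSpace ℝ (Fin n)) :
    Integrable (fun y => phiKer n s r (x - y)) μ :=
  (integrable_const (1 : ℝ)).mono'
    (measurable_phiKer.comp (measurable_const.sub measurable_id)).aestronglyMeasurable
    (.of_forall fun y => by
      simpa [abs_of_nonneg (phiKer_nonneg hr _)] using phiKer_le_one (x - y))

lemma phiKer_sub_le_of_dist_lt (hs : 0 ≤ s) (hr : 0 < r) {x y z : EuclideanSpace ℝ (Fin n)}
    (hz : dist z x < r / 4) :
    phiKer n s r (x - y) ≤ 3 ^ s * (1 + ‖r⁻¹ • (z - y)‖) ^ (-s) := by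
  have hbr : 0 < 1 + ‖z - y‖ / r := by positivity
  rw [norm_smul, Real.norm_of_nonneg (inv_nonneg.2 hr.le), inv_mul_eq_div,
    Real.rpow_neg hbr.le, ← Real.inv_rpow hbr.le, ← Real.mul_rpow (by norm_num) (by positivity),
    ← div_eq_mul_inv]
  have hzy : ‖z - y‖ ≤ r / 4 + ‖x - y‖ := by
    rw [dist_eq_norm] at hz
    linarith [norm_sub_le_norm_sub_add_norm_sub z x y]
  rcases le_or_gt ‖x - y‖ r with hxy | hxy
  · refine (phiKer_le_one _).trans (Real.one_le_rpow ?_ hs)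
    have : ‖z - y‖ / r ≤ 2 := by rw [div_le_iff₀ hr]; linarith
    rw [one_le_div hbr]
    linarith
  · have hxy0 : x - y ≠ 0 := norm_pos_iff.1 (hr.trans hxy)
    rw [phiKer, if_neg hxy0]
    refine (min_le_right _ _).trans (Real.rpow_le_rpow (by positivity) ?_ hs)
    rw [div_le_div_iff₀ (hr.trans hxy) hbr, mul_add, mul_one, mul_div_cancel₀ _ hr.ne']
    linarith

/-- The constant `c_{n,s}`. -/
noncomputable def packingConst (n : ℕ) (s : ℝ) : ℝ :=
  3 ^ s * 4 ^ n * (∫ w : EuclideanSpace ℝ (Fin n), (1 + ‖w‖) ^ (-s)) /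
    volume.real (ball (0 : EuclideanSpace ℝ (Fin n)) 1)

lemma sum_phiKer_sub_le_packingConst (hs : (n : ℝ) < s) (hr : 0 < r)
    {S : Finset (EuclideanSpace ℝ (Fin n))}
    (hS : IsSeparated (ENNReal.ofReal (r / 2)) (S : Set (EuclideanSpace ℝ (Fin n))))
    (y : EuclideanSpace ℝ (Fin n)) :
    ∑ x ∈ S, phiKer n s r (x - y) ≤ packingConst n s := by
  have hdim : Module.finrank ℝ (EuclideanSpace ℝ (Fin n)) = n := finrank_euclideanSpace_fin
  set bracket : EuclideanSpace ℝ (Fin n) → ℝ := fun w => (1 + ‖w‖) ^ (-s)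
  set g : EuclideanSpace ℝ (Fin n) → ℝ := fun z => 3 ^ s * bracket (r⁻¹ • (z - y))
  have hbracket : Integrable bracket := integrable_one_add_norm (by rwa [hdim])
  have hg : Integrable g :=
    (((integrable_comp_smul_iff volume bracket (inv_ne_zero hr.ne')).2 hbracket).comp_sub_right
      y).const_mul _
  have hg_int : ∫ z, g z = 3 ^ s * (r ^ n * ∫ w, bracket w) := by
    rw [integral_const_mul, integral_sub_right_eq_self (fun z => bracket (r⁻¹ • z)) y,
      Measure.integral_comp_inv_smul_of_nonneg volume bracket hr.le, hdim, smul_eq_mul]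
  set V := volume.real (ball (0 : EuclideanSpace ℝ (Fin n)) 1)
  have hV : 0 < V := ENNReal.toReal_pos (measure_ball_pos _ _ one_pos).ne' measure_ball_lt_top.ne
  have hball : ∀ x : EuclideanSpace ℝ (Fin n),
      volume.real (ball x (r / 4)) = (r / 4) ^ n * V := by
    intro x
    rw [measureReal_def, Measure.addHaar_ball_of_pos volume x (by positivity), hdim,
      ENNReal.toReal_mul, ENNReal.toReal_ofReal (by positivity)]
    rfl
  have hdisj : (S : Set (EuclideanSpace ℝ (Fin n))).PairwiseDisjoint (ball · (r / 4)) :=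
    fun a ha b hb hab => ball_disjoint_ball <| by
      have : ENNReal.ofReal (r / 2) < edist a b := hS ha hb hab
      rw [edist_dist, ENNReal.ofReal_lt_ofReal_iff_of_nonneg (by positivity)] at this
      linarith
  have hpacking :=
    sum_mul_measureReal_ball_le_integral (f := fun x => phiKer n s r (x - y)) hdisj hg
      (fun z => mul_nonneg (by positivity) (by positivity))
      (fun x _ z hz => phiKer_sub_le_of_dist_lt
        ((Nat.cast_nonneg n).trans hs.le) hr (mem_ball.1 hz))
  simp only [hball, ← Finset.mul_sum, hg_int] at hpacking
  rw [packingConst, le_div_iff₀ hV]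
  calc (∑ x ∈ S, phiKer n s r (x - y)) * V
      = (r / 4) ^ n * V * (∑ x ∈ S, phiKer n s r (x - y)) * (4 ^ n / r ^ n) := by
        rw [div_pow]; field_simp
    _ ≤ 3 ^ s * (r ^ n * ∫ w, bracket w) * (4 ^ n / r ^ n) := by gcongr
    _ = 3 ^ s * 4 ^ n * ∫ w, bracket w := by field_simp

lemma one_le_packingConst (hs : (n : ℝ) < s) : 1 ≤ packingConst n s := by
  simpa [phiKer] using sum_phiKer_sub_le_packingConst hs one_pos (S := {0}) (by simp) 0

lemma card_mul_le_packingConst {γ : ℝ} (hs : (n : ℝ) < s) (hr : 0 < r)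
    (μ : Measure (EuclideanSpace ℝ (Fin n))) [IsProbabilityMeasure μ]
    {S : Finset (EuclideanSpace ℝ (Fin n))}
    (hS : IsSeparated (ENNReal.ofReal (r / 2)) (S : Set (EuclideanSpace ℝ (Fin n))))
    (hγ : ∀ x ∈ S, γ ≤ ∫ y, phiKer n s r (x - y) ∂μ) :
    S.card * γ ≤ packingConst n s :=
  calc S.card * γ = ∑ _x ∈ S, γ := by rw [Finset.sum_const, nsmul_eq_mul]
    _ ≤ ∑ x ∈ S, ∫ y, phiKer n s r (x - y) ∂μ := Finset.sum_le_sum hγ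
    _ = ∫ y, ∑ x ∈ S, phiKer n s r (x - y) ∂μ :=
        (integral_finsetSum S fun x _ => integrable_phiKer_sub hr.le μ x).symm
    _ ≤ ∫ _y, packingConst n s ∂μ :=
        integral_mono (integrable_finsetSum S fun x _ => integrable_phiKer_sub hr.le μ x)
          (integrable_const _) fun y => sum_phiKer_sub_le_packingConst hs hr hS y
    _ = packingConst n s := by simp

end Kernel

theorem stmt_8_general (n : ℕ) (s : ℝ) (hs : (n : ℝ) < s) :
    ∃ c : ℝ, 0 < c ∧
      ∀ (E : Set (EuclideanSpace ℝ (Fin n))), E.Nonempty → IsCompact E →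
        ∀ r : ℝ, 0 < r → ∀ γ : ℝ, 0 < γ →
          ∀ μ : Measure (EuclideanSpace ℝ (Fin n)), IsProbabilityMeasure μ → μ Eᶜ = 0 →
            (∀ x ∈ E, γ ≤ ∫ y, phiKer n s r (x - y) ∂μ) →
            (coverNum E r : ℝ) ≤ c / γ := by
  refine ⟨packingConst n s, one_pos.trans_le (one_le_packingConst hs), ?_⟩
  intro E _ _ r hr γ hγ μ _ _ hE
  set ε := (r / 2).toNNReal
  have hr_eq : r = 2 * (ε : ℝ) := by rw [Real.coe_toNNReal _ (by positivity)]; ring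
  have hpacking : packingNumber ε E ≤ ⌊packingConst n s / γ⌋₊ :=
    packingNumber_le_of_forall_finset_card_le fun S hSE hS => Nat.le_floor <| by
      rw [le_div_iff₀ hγ]
      exact card_mul_le_packingConst hs hr μ hS fun x hx => hE x (hSE hx)
  have hcover : (coverNum E r : ℕ∞) ≤ ⌊packingConst n s / γ⌋₊ := hr_eq ▸
    (coverNum_two_mul_le_externalCoveringNumber ε E).trans <|
      (externalCoveringNumber_le_coveringNumber ε E).trans <|
        (coveringNumber_le_packingNumber ε E).trans hpacking
  exact (Nat.cast_le.2 (ENat.natCast_le_natCast.1 hcover)).trans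
    (Nat.floor_le (div_nonneg (zero_le_one.trans (one_le_packingConst hs)) hγ.le))

theorem stmt_8 (n : ℕ) (hn : 1 ≤ n) (s : ℝ) (hs : (n : ℝ) < s) :
    ∃ c : ℝ, 0 < c ∧
      ∀ (E : Set (EuclideanSpace ℝ (Fin n))), E.Nonempty → IsCompact E →
        ∀ r : ℝ, 0 < r → ∀ γ : ℝ, 0 < γ →
          ∀ μ : Measure (EuclideanSpace ℝ (Fin n)), IsProbabilityMeasure μ → μ Eᶜ = 0 →
            (∀ x ∈ E, γ ≤ ∫ y, phiKer n s r (x - y) ∂μ) →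
            (coverNum E r : ℝ) ≤ c / γ :=
  stmt_8_general n s hs
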